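/- arXiv:1811.05893 — 4 statements merged into one kernel-verified Lean document; each statement's English description precedes it below -/
import Mathlib

section
/- Let A ∈ ℂ^{n×n}, B ∈ ℂ^{n×m}, C ∈ ℂ^{p×n}, D ∈ ℂ^{p×m}, and let K ∈ ℂ^{m×n} be such that iω ∈ ρ(A) ∩ ρ(A+BK) for a real ω. Then the matrix P_K(iω) = (C+DK)(iω - A - BK)⁻¹B + D is surjective if and only if P(iω) = C(iω - A)⁻¹B + D is surjective. -/
open Matrix Complex

/-! Writing `E = iω - A` and `F = iω - (A + BK)`, so that `E - F = BK`, the resolvent identity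
`F⁻¹ = E⁻¹ + E⁻¹ B K F⁻¹` factors the closed-loop transfer function through the open-loop one:
`P_K = P (1 + K F⁻¹ B)`. Since `-K` is a feedback turning `A + BK` back into `A`, symmetrically
`P = P_K (1 - K E⁻¹ B)`, so each of `P`, `P_K` has range contained in the other's. -/

namespace Matrix

variable {R ι κ ν : Type*} [CommRing R] [Fintype ι] [Fintype κ]

theorem feedback_transfer_eq_mul [DecidableEq ι] [DecidableEq κ] (E F : Matrix ι ι R)
    (B : Matrix ι κ R) (C : Matrix ν ι R) (D : Matrix ν κ R) (K : Matrix κ ι R)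
    (hEF : E - F = B * K) (h : IsUnit E ↔ IsUnit F) :
    (C + D * K) * F⁻¹ * B + D = (C * E⁻¹ * B + D) * (1 + K * F⁻¹ * B) := by
  have resolvent : F⁻¹ = E⁻¹ + E⁻¹ * B * K * F⁻¹ := by
    rw [Matrix.mul_assoc E⁻¹ B K, ← hEF, ← sub_eq_iff_eq_add', ← neg_sub, inv_sub_inv h,
      ← neg_sub E F, Matrix.mul_neg, Matrix.neg_mul, neg_neg]
  calc (C + D * K) * F⁻¹ * B + D
      = C * (E⁻¹ + E⁻¹ * B * K * F⁻¹) * B + D * K * F⁻¹ * B + D := by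
        rw [← resolvent, Matrix.add_mul, Matrix.add_mul]
    _ = (C * E⁻¹ * B + D) * (1 + K * F⁻¹ * B) := by
        simp only [Matrix.add_mul, Matrix.mul_add, Matrix.mul_assoc]
        rw [Matrix.mul_one, Matrix.mul_one]
        abel

theorem surjective_mulVecLin_of_mul {M : Matrix ν ι R} {N : Matrix ι κ R}
    (h : Function.Surjective (M * N).mulVecLin) : Function.Surjective M.mulVecLin := by
  rw [mulVecLin_mul, LinearMap.coe_comp] at h
  exact h.of_comp

end Matrix

/-- With `iω ∈ ρ(A) ∩ ρ(A+BK)`, the transfer function value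
`P_K(iω) = (C+DK)(iω - A - BK)⁻¹B + D` is surjective iff `P(iω) = C(iω - A)⁻¹B + D` is. -/
theorem stmt_2 {n m p : ℕ}
    (A : Matrix (Fin n) (Fin n) ℂ) (B : Matrix (Fin n) (Fin m) ℂ)
    (C : Matrix (Fin p) (Fin n) ℂ) (D : Matrix (Fin p) (Fin m) ℂ)
    (K : Matrix (Fin m) (Fin n) ℂ) (ω : ℝ)
    (h₁ : IsUnit ((Complex.I * ω) • (1 : Matrix (Fin n) (Fin n) ℂ) - A))
    (h₂ : IsUnit ((Complex.I * ω) • (1 : Matrix (Fin n) (Fin n) ℂ) - (A + B * K))) :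
    Function.Surjective
        (((C + D * K) * ((Complex.I * ω) • (1 : Matrix (Fin n) (Fin n) ℂ) - (A + B * K))⁻¹ * B
          + D).mulVecLin)
      ↔ Function.Surjective
        ((C * ((Complex.I * ω) • (1 : Matrix (Fin n) (Fin n) ℂ) - A)⁻¹ * B + D).mulVecLin) := by
  have closed_loop := feedback_transfer_eq_mul _ _ B C D K (by abel) (iff_of_true h₁ h₂)
  have open_loop := feedback_transfer_eq_mul _ _ B (C + D * K) D (-K)
    (by rw [Matrix.mul_neg]; abel) (iff_of_true h₂ h₁)
  rw [Matrix.mul_neg, add_neg_cancel_right] at open_loop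
  exact ⟨fun h ↦ surjective_mulVecLin_of_mul (closed_loop ▸ h),
    fun h ↦ surjective_mulVecLin_of_mul (open_loop ▸ h)⟩
end

section
/- Let A ∈ ℂ^{n×n}, B ∈ ℂ^{n×m}, C ∈ ℂ^{p×n}, and L, L̃ ∈ ℂ^{n×p} be such that iω ∈ ρ(A+LC) ∩ ρ(A+L̃C) for some real ω, and set P_L(iω) = C(iω - A - LC)⁻¹(B+LD) + D and similarly P_{L̃}. Then the matrix I - C(iω - A - LC)⁻¹(L̃-L) is invertible and P_{L̃}(iω) = (I - C(iω - A - LC)⁻¹(L̃-L))⁻¹ P_L(iω). -/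
/-!
Write `M = iω - A - LC` and `M̃ = iω - A - L̃C`, so that `M - M̃ = (L̃ - L)C`.
By Sylvester's determinant identity `det (I - C M⁻¹ (L̃ - L)) = det (M⁻¹ M̃)`, which is a unit.
The second resolvent identity `M⁻¹ (M - M̃) M̃⁻¹ = M̃⁻¹ - M⁻¹` then gives
`(I - C M⁻¹ (L̃ - L)) P_{L̃}(iω) = P_L(iω)`.
-/

namespace Matrix

variable {R n p m : Type*} [CommRing R] [Fintype n] [DecidableEq n] [Fintype p] [DecidableEq p]
  {M N : Matrix n n R} {C : Matrix p n R}

theorem det_one_sub_mul_inv_mul (hM : IsUnit M) (E : Matrix n p R) :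
    det (1 - C * M⁻¹ * E) = det (M⁻¹ * (M - E * C)) := by
  rw [Matrix.mul_assoc, det_one_sub_mul_comm, Matrix.mul_sub,
    nonsing_inv_mul M ((isUnit_iff_isUnit_det M).mp hM), Matrix.mul_assoc]

theorem isUnit_one_sub_mul_inv_mul {E : Matrix n p R} (hM : IsUnit M) (hN : IsUnit N)
    (hMN : M - N = E * C) : IsUnit (1 - C * M⁻¹ * E) := by
  rw [isUnit_iff_isUnit_det, det_one_sub_mul_inv_mul hM, ← hMN, sub_sub_cancel, det_mul]
  exact (isUnit_nonsing_inv_det M ((isUnit_iff_isUnit_det M).mp hM)).mul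
    ((isUnit_iff_isUnit_det N).mp hN)

theorem one_sub_mul_inv_mul_mul_transfer {L L' : Matrix n p R} (hM : IsUnit M) (hN : IsUnit N)
    (hMN : M - N = (L' - L) * C) (B : Matrix n m R) (D : Matrix p m R) :
    (1 - C * M⁻¹ * (L' - L)) * (C * N⁻¹ * (B + L' * D) + D) = C * M⁻¹ * (B + L * D) + D := by
  have resolvent : M⁻¹ * ((L' - L) * C) * N⁻¹ = N⁻¹ - M⁻¹ := by
    rw [← hMN, ← neg_sub N M, Matrix.mul_neg, Matrix.neg_mul,
      ← inv_sub_inv (iff_of_true hM hN), neg_sub]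
  have hBL : B + L * D = B + L' * D - (L' - L) * D := by rw [Matrix.sub_mul]; abel
  calc (1 - C * M⁻¹ * (L' - L)) * (C * N⁻¹ * (B + L' * D) + D)
      = C * N⁻¹ * (B + L' * D) + D - C * (M⁻¹ * ((L' - L) * C) * N⁻¹) * (B + L' * D)
          - C * M⁻¹ * ((L' - L) * D) := by
        simp only [Matrix.sub_mul, Matrix.mul_add, Matrix.one_mul, Matrix.mul_assoc]
        abel
    _ = C * M⁻¹ * (B + L * D) + D := by
        rw [resolvent, hBL]
        simp only [Matrix.mul_sub, Matrix.sub_mul, Matrix.mul_assoc]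
        abel

end Matrix

/-- For two output injections `L`, `L̃` with `iω ∈ ρ(A+LC) ∩ ρ(A+L̃C)`,
the matrix `I - C(iω - A - LC)⁻¹(L̃-L)` is invertible and
`P_{L̃}(iω) = (I - C(iω - A - LC)⁻¹(L̃-L))⁻¹ P_L(iω)`. -/
theorem stmt_3 {n m p : ℕ}
    (A : Matrix (Fin n) (Fin n) ℂ) (B : Matrix (Fin n) (Fin m) ℂ)
    (C : Matrix (Fin p) (Fin n) ℂ) (D : Matrix (Fin p) (Fin m) ℂ)
    (L Lt : Matrix (Fin n) (Fin p) ℂ) (ω : ℝ)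
    (hL : IsUnit ((Complex.I * ω) • (1 : Matrix (Fin n) (Fin n) ℂ) - (A + L * C)))
    (hLt : IsUnit ((Complex.I * ω) • (1 : Matrix (Fin n) (Fin n) ℂ) - (A + Lt * C))) :
    IsUnit ((1 : Matrix (Fin p) (Fin p) ℂ)
        - C * ((Complex.I * ω) • (1 : Matrix (Fin n) (Fin n) ℂ) - (A + L * C))⁻¹ * (Lt - L))
    ∧ C * ((Complex.I * ω) • (1 : Matrix (Fin n) (Fin n) ℂ) - (A + Lt * C))⁻¹ * (B + Lt * D) + D
      = ((1 : Matrix (Fin p) (Fin p) ℂ)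
          - C * ((Complex.I * ω) • (1 : Matrix (Fin n) (Fin n) ℂ) - (A + L * C))⁻¹ * (Lt - L))⁻¹
        * (C * ((Complex.I * ω) • (1 : Matrix (Fin n) (Fin n) ℂ) - (A + L * C))⁻¹ * (B + L * D)
            + D) := by
  have hMN : ((Complex.I * ω) • (1 : Matrix (Fin n) (Fin n) ℂ) - (A + L * C))
      - ((Complex.I * ω) • (1 : Matrix (Fin n) (Fin n) ℂ) - (A + Lt * C)) = (Lt - L) * C := by
    rw [Matrix.sub_mul]; abel
  have hX := Matrix.isUnit_one_sub_mul_inv_mul hL hLt hMN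
  refine ⟨hX, ?_⟩
  rw [← Matrix.one_sub_mul_inv_mul_mul_transfer hL hLt hMN B D,
    Matrix.nonsing_inv_mul_cancel_left _ _ ((Matrix.isUnit_iff_isUnit_det _).mp hX)]
end

section
/- Suppose K = [K₁, K₂] is such that the block matrix [[G₁, G₂C],[0, A]] + [[G₂D],[B]]·[K₁, K₂] is Hurwitz (all eigenvalues have negative real part), where G₁ has only purely imaginary eigenvalues ±iω_k. Then the pair (K₁, G₁) is observable. -/
/-! If `G₁ φ = μ φ` with `φ ≠ 0` and `K₁ φ = 0`, then `(φ, 0)` is an eigenvector of the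
closed-loop matrix with the same eigenvalue `μ`, because the feedback term and the lower-left
block `B K₁` both annihilate `φ`. As an eigenvalue of `G₁`, `μ` is purely imaginary, which
contradicts the Hurwitz property. -/

open Matrix

/-- A square complex matrix is Hurwitz if all its eigenvalues have negative real part. -/
def Hurwitz {ι : Type*} [Fintype ι] [DecidableEq ι] (M : Matrix ι ι ℂ) : Prop :=
  ∀ μ ∈ spectrum ℂ M, μ.re < 0

namespace Matrix

variable {K : Type*} [Field K]

theorem mem_spectrum_of_mulVec_eq_smul {ι : Type*} [Fintype ι] [DecidableEq ι]
    {M : Matrix ι ι K} {μ : K} {v : ι → K} (hv : v ≠ 0) (h : M *ᵥ v = μ • v) :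
    μ ∈ spectrum K M := by
  rw [← spectrum_toLin', ← Module.End.hasEigenvalue_iff_mem_spectrum]
  exact Module.End.hasEigenvalue_of_hasEigenvector
    ⟨Module.End.mem_eigenspace_iff.2 (by rwa [toLin'_apply]), hv⟩

variable {l m : Type*} [Fintype l] [Fintype m]

theorem fromBlocks_mulVec_sum_elim_zero (A : Matrix l l K) (B : Matrix l m K)
    (C : Matrix m l K) (D : Matrix m m K) (φ : l → K) :
    fromBlocks A B C D *ᵥ Sum.elim φ 0 = Sum.elim (A *ᵥ φ) (C *ᵥ φ) := by
  rw [fromBlocks_mulVec]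
  simp only [Sum.elim_comp_inl, Sum.elim_comp_inr, mulVec_zero, add_zero]

theorem mem_spectrum_fromBlocks_of_mulVec_eq_smul [DecidableEq l] [DecidableEq m]
    {A : Matrix l l K} (B : Matrix l m K) {C : Matrix m l K} (D : Matrix m m K)
    {μ : K} {φ : l → K} (hφ : φ ≠ 0)
    (hA : A *ᵥ φ = μ • φ) (hC : C *ᵥ φ = 0) :
    μ ∈ spectrum K (fromBlocks A B C D) := by
  refine mem_spectrum_of_mulVec_eq_smul (v := Sum.elim φ 0) ?_ ?_
  · exact fun h ↦ hφ (funext fun i ↦ congrFun h (Sum.inl i))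
  · rw [fromBlocks_mulVec_sum_elim_zero, hA, hC]
    ext (i | i) <;> simp

end Matrix

/-- if `[[G₁,G₂C],[0,A]] + [[G₂D],[B]]·[K₁,K₂]` is Hurwitz and `G₁` has only
purely imaginary eigenvalues, then the pair `(K₁, G₁)` is observable (Hautus test). -/
theorem stmt_6 {n m p s : ℕ}
    (G₁ : Matrix (Fin s) (Fin s) ℂ) (G₂ : Matrix (Fin s) (Fin p) ℂ)
    (A : Matrix (Fin n) (Fin n) ℂ) (B : Matrix (Fin n) (Fin m) ℂ)
    (C : Matrix (Fin p) (Fin n) ℂ) (D : Matrix (Fin p) (Fin m) ℂ)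
    (K₁ : Matrix (Fin m) (Fin s) ℂ) (K₂ : Matrix (Fin m) (Fin n) ℂ)
    (hG₁ : ∀ μ ∈ spectrum ℂ G₁, μ.re = 0)
    (hHur : Hurwitz (Matrix.fromBlocks G₁ (G₂ * C) 0 A
      + Matrix.fromBlocks (G₂ * D * K₁) (G₂ * D * K₂) (B * K₁) (B * K₂))) :
    ∀ (μ : ℂ) (φ : Fin s → ℂ), φ ≠ 0 → G₁.mulVec φ = μ • φ → K₁.mulVec φ ≠ 0 := by
  intro μ φ hφ hG hK
  have hK₁ {q : ℕ} (X : Matrix (Fin q) (Fin m) ℂ) : (X * K₁) *ᵥ φ = 0 := by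
    rw [← mulVec_mulVec, hK, mulVec_zero]
  have hA : (G₁ + G₂ * D * K₁) *ᵥ φ = μ • φ := by rw [add_mulVec, hG, hK₁, add_zero]
  have hC : (0 + B * K₁) *ᵥ φ = 0 := by rw [zero_add, hK₁]
  have hμ_closed : μ.re < 0 := by
    refine hHur μ ?_
    rw [fromBlocks_add]
    exact mem_spectrum_fromBlocks_of_mulVec_eq_smul _ _ hφ hA hC
  have hμ_imag : μ.re = 0 := hG₁ μ (mem_spectrum_of_mulVec_eq_smul hφ hG)
  exact hμ_closed.ne hμ_imag
end

section
/- Let α, β, γ ∈ ℝ with α, β > 0 and γ ≥ 0, and let (η_n) be a sequence of positive reals with η_n → ∞. For each n, let λ_n ∈ ℂ be a root of λ² - (βη_n + γ)λ - αη_n = 0 satisfying λ_n ≠ -α/β and such that λ_n is the root given by λ_n = ((βη_n+γ) - √((βη_n+γ)² + 4αη_n))/2 (the smaller root). Then λ_n → -α/β as n → ∞. -/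
/-!
Rationalising the smaller root gives
`λ_n = -2α / (β + γ/η_n + √((β + γ/η_n)² + 4α/η_n))`,
a continuous function of `1/η_n → 0` whose value at `0` is `-2α/(2β) = -α/β`.
-/

open Filter Topology

lemma add_sqrt_sq_add_pos (y : ℝ) {c : ℝ} (hc : 0 < c) : 0 < y + √(y ^ 2 + c) := by
  have : |y| < √(y ^ 2 + c) := (Real.lt_sqrt (abs_nonneg y)).2 (by rw [sq_abs]; linarith)
  linarith [neg_abs_le y]

lemma sub_sqrt_sq_add_eq_div (y : ℝ) {c : ℝ} (hc : 0 < c) :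
    y - √(y ^ 2 + c) = -c / (y + √(y ^ 2 + c)) := by
  rw [eq_div_iff (add_sqrt_sq_add_pos y hc).ne']
  nlinarith [Real.sq_sqrt (by positivity : 0 ≤ y ^ 2 + c)]

lemma smaller_root_eq_div {a e : ℝ} (b g : ℝ) (ha : 0 < a) (he : 0 < e) :
    ((b * e + g) - √((b * e + g) ^ 2 + 4 * a * e)) / 2
      = -(2 * a) / (b + g * e⁻¹ + √((b + g * e⁻¹) ^ 2 + 4 * a * e⁻¹)) := by
  have hlin : b * e + g = e * (b + g * e⁻¹) := by field_simp
  have hdisc : (b * e + g) ^ 2 + 4 * a * e = e ^ 2 * ((b + g * e⁻¹) ^ 2 + 4 * a * e⁻¹) := by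
    field_simp
  rw [hdisc, Real.sqrt_mul (sq_nonneg e), Real.sqrt_sq he.le, hlin, ← mul_sub,
    sub_sqrt_sq_add_eq_div _ (by positivity)]
  field_simp
  norm_num

theorem tendsto_smaller_root {ι : Type*} {l : Filter ι} {a b : ℝ} (g : ℝ) (ha : 0 < a)
    (hb : 0 < b) {η : ι → ℝ} (hη : Tendsto η l atTop) :
    Tendsto (fun n => ((b * η n + g) - √((b * η n + g) ^ 2 + 4 * a * η n)) / 2) l
      (𝓝 (-(a / b))) := by
  set f : ℝ → ℝ := fun t => -(2 * a) / (b + g * t + √((b + g * t) ^ 2 + 4 * a * t))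
  have hf0 : f 0 = -(a / b) := by
    simp only [f, mul_zero, add_zero, Real.sqrt_sq hb.le]
    field_simp
    ring
  have hf : ContinuousAt f 0 := by
    refine continuousAt_const.div (by fun_prop) ?_
    simp only [mul_zero, add_zero, Real.sqrt_sq hb.le]
    positivity
  refine (hf0 ▸ hf.tendsto.comp (tendsto_inv_atTop_zero.comp hη)).congr' ?_
  filter_upwards [hη.eventually_gt_atTop 0] with n hn
  exact (smaller_root_eq_div b g ha hn).symm

theorem stmt_15_general (α β γ : ℝ) (hα : 0 < α) (hβ : 0 < β)
    (η : ℕ → ℝ) (hη : Tendsto η atTop atTop)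
    (l : ℕ → ℂ)
    (hformula : ∀ n,
      l n = (((β * η n + γ) - Real.sqrt ((β * η n + γ) ^ 2 + 4 * α * η n)) / 2 : ℝ)) :
    Tendsto l atTop (nhds ((-(α / β) : ℝ) : ℂ)) := by
  rw [funext hformula]
  exact (tendsto_smaller_root γ hα hβ hη).ofReal

/-- the branch of roots `λ_n` of `λ² - (βη_n+γ)λ - αη_n = 0` given by the
smaller root formula, with `λ_n ≠ -α/β` and `η_n → ∞`, converges to `-α/β`. -/
theorem stmt_15 (α β γ : ℝ) (hα : 0 < α) (hβ : 0 < β) (hγ : 0 ≤ γ)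
    (η : ℕ → ℝ) (hηpos : ∀ n, 0 < η n) (hη : Tendsto η atTop atTop)
    (l : ℕ → ℂ)
    (hroot : ∀ n, (l n) ^ 2 - ((β * η n + γ : ℝ) : ℂ) * l n - ((α * η n : ℝ) : ℂ) = 0)
    (hne : ∀ n, l n ≠ ((-(α / β) : ℝ) : ℂ))
    (hformula : ∀ n,
      l n = (((β * η n + γ) - Real.sqrt ((β * η n + γ) ^ 2 + 4 * α * η n)) / 2 : ℝ)) :
    Tendsto l atTop (nhds ((-(α / β) : ℝ) : ℂ)) :=
  stmt_15_general α β γ hα hβ η hη l hformula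
end
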